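/- arXiv:1912.03096 — 3 statements merged into one kernel-verified Lean document; each statement's English description precedes it below -/
import Mathlib

section
/- Let $0<|x|<1$, $r>1$, $s = r+1$, and define for $i,j \geq 0$ the formal power series $f_{i,j}(z)=\exp\left(-\sum_{m=1}^\infty \frac{1}{m}\frac{[(r-1)m]_x[rm]_x[\min(i,j)m]_x[(s-\max(i,j))m]_x}{[m]_x[sm]_x}(x-x^{-1})^2 z^m\right)$. Then for all $1 \leq i \leq j$, $f_{i,j}(z) = \prod_{k=1}^{i} f_{1,j}(x^{-i-1+2k} z)$ as formal power series in $z$. -/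
/-!
Since `[i a]_x = [a]_x ∑_{k=1}^i x^{(2k-i-1)a}`, the coefficient of `z^m` in `log f_{i,j}` is the
sum over `k` of the coefficient of `z^m` in `log f_{1,j}(x^{2k-i-1} z)`. The coefficients of
`log f_{i,j}` grow at most geometrically, so all these logarithmic series converge near `0`, and
`exp` turns the finite sum into the product.
-/

/-- The q-integer with real index: `[a]_x = (x^a - x^{-a})/(x - x⁻¹)`. -/
noncomputable def qint (x a : ℝ) : ℝ := (x ^ a - x ^ (-a)) / (x - x⁻¹)

/-- The structure function
`f_{i,j}(z) = exp(-∑_{m≥1} (1/m) [(r-1)m][rm][min(i,j)m][(s-max(i,j))m]/([m][sm]) (x-x⁻¹)² z^m)`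
with `s = r+1`, as a function of `z` (convergent for small `‖z‖`). -/
noncomputable def ff (x r : ℝ) (i j : ℕ) (z : ℂ) : ℂ :=
  Complex.exp (-∑' m : ℕ,
    ((qint x ((r - 1) * (m + 1)) * qint x (r * (m + 1)) * qint x ((min i j : ℝ) * (m + 1)) *
        qint x ((r + 1 - (max i j : ℝ)) * (m + 1)) /
        (qint x ((m : ℝ) + 1) * qint x ((r + 1) * (m + 1))) * (x - x⁻¹) ^ 2 : ℝ) : ℂ)
      * z ^ (m + 1) / ((m : ℂ) + 1))

/-- The rational function `Δ_i(z) = (1-x^{2r-i}z)(1-x^{-2r+i}z)/((1-x^i z)(1-x^{-i}z))`. -/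
noncomputable def Dlt (x r : ℝ) (i : ℕ) (z : ℂ) : ℂ :=
  ((1 - ((x ^ (2 * r - (i : ℝ)) : ℝ) : ℂ) * z) * (1 - ((x ^ ((i : ℝ) - 2 * r) : ℝ) : ℂ) * z)) /
    ((1 - ((x ^ (i : ℝ) : ℝ) : ℂ) * z) * (1 - ((x ^ (-(i : ℝ)) : ℝ) : ℂ) * z))

open Finset

section QInt

variable {x : ℝ}

theorem qint_natCast_mul (hx : 0 < x) (n : ℕ) (a : ℝ) :
    qint x (n * a) = qint x a * ∑ k ∈ Icc 1 n, x ^ ((2 * (k : ℝ) - n - 1) * a) := by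
  have step (b : ℝ) :
      (x ^ a - x ^ (-a)) * x ^ ((b - 1) * a) = x ^ (b * a) - x ^ ((b - 2) * a) := by
    rw [sub_mul, ← Real.rpow_add hx, ← Real.rpow_add hx]
    ring_nf
  have telescope := sum_range_sub (fun t : ℕ => x ^ ((2 * (t : ℝ) - n) * a)) n
  unfold qint
  rw [div_mul_eq_mul_div, mul_sum, ← Ico_add_one_right_eq_Icc, sum_Ico_eq_sum_range]
  congr 1
  convert telescope.symm using 1
  · push_cast; ring_nf
  · refine sum_congr rfl fun t _ => ?_
    convert step (2 * (t : ℝ) - n + 2) using 3 <;> push_cast <;> ring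

theorem qint_eq_inv_sub (a : ℝ) : qint x a = (x ^ (-a) - x ^ a) / (x⁻¹ - x) := by
  rw [qint, ← neg_sub (x ^ (-a)), ← neg_sub x⁻¹, neg_div_neg_eq]

theorem one_le_qint (hx0 : 0 < x) (hx1 : x < 1) {a : ℝ} (ha : 1 ≤ a) : 1 ≤ qint x a := by
  have hinv : 1 < x⁻¹ := (one_lt_inv₀ hx0).mpr hx1
  have hneg : x⁻¹ ≤ x ^ (-a) := by
    rw [← Real.rpow_neg_one]
    exact Real.rpow_le_rpow_of_exponent_ge hx0 hx1.le (by linarith)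
  have hpos : x ^ a ≤ x := by
    simpa using Real.rpow_le_rpow_of_exponent_ge hx0 hx1.le ha
  rw [qint_eq_inv_sub, le_div_iff₀ (by linarith), one_mul]
  linarith

theorem abs_qint_le (hx0 : 0 < x) (hx1 : x ≤ 1) (a : ℝ) :
    |qint x a| ≤ 2 / |x - x⁻¹| * x ^ (-|a|) := by
  have hle (b : ℝ) (hb : -|a| ≤ b) : x ^ b ≤ x ^ (-|a|) :=
    Real.rpow_le_rpow_of_exponent_ge hx0 hx1 hb
  rw [qint, abs_div, div_mul_eq_mul_div, mul_comm]
  gcongr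
  calc |x ^ a - x ^ (-a)| ≤ x ^ a + x ^ (-a) := by
        rw [abs_le]
        constructor <;> nlinarith [Real.rpow_pos_of_pos hx0 a, Real.rpow_pos_of_pos hx0 (-a)]
    _ ≤ x ^ (-|a|) * 2 := by
        linarith [hle a (by linarith [neg_abs_le a]), hle (-a) (by linarith [le_abs_self a])]

theorem abs_qint_mul_succ_le (hx0 : 0 < x) (hx1 : x ≤ 1) (c : ℝ) (m : ℕ) :
    |qint x (c * (m + 1))| ≤ 2 / |x - x⁻¹| * (x ^ (-|c|)) ^ (m + 1) := by
  convert abs_qint_le hx0 hx1 (c * (m + 1)) using 2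
  rw [← Real.rpow_mul_natCast hx0.le, abs_mul, abs_of_pos (by positivity : (0 : ℝ) < m + 1)]
  push_cast; ring_nf

end QInt

theorem summable_ofReal_mul_pow_succ_div {a : ℕ → ℝ} {C ρ : ℝ} (hρ : 0 ≤ ρ)
    (ha : ∀ m, |a m| ≤ C * ρ ^ (m + 1)) {w : ℂ} (hw : ρ * ‖w‖ < 1) :
    Summable fun m : ℕ => (a m : ℂ) * w ^ (m + 1) / ((m : ℂ) + 1) := by
  have hq : |ρ * ‖w‖| < 1 := by rwa [abs_of_nonneg (by positivity)]
  refine .of_norm_bounded ((summable_geometric_of_abs_lt_one hq).mul_left (C * (ρ * ‖w‖)))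
    fun m => ?_
  have hm : (1 : ℝ) ≤ ‖(m : ℂ) + 1‖ := by
    rw [show (m : ℂ) + 1 = ((m + 1 : ℕ) : ℂ) by push_cast; rfl, Complex.norm_natCast]
    exact_mod_cast m.succ_pos
  calc ‖(a m : ℂ) * w ^ (m + 1) / ((m : ℂ) + 1)‖
      ≤ |a m| * ‖w‖ ^ (m + 1) := by
        rw [norm_div, norm_mul, norm_pow, Complex.norm_real, Real.norm_eq_abs]
        exact div_le_self (by positivity) hm
    _ ≤ C * ρ ^ (m + 1) * ‖w‖ ^ (m + 1) := by gcongr; exact ha m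
    _ = C * (ρ * ‖w‖) * (ρ * ‖w‖) ^ m := by ring

-- Coefficient of `z ^ (m + 1) / (m + 1)` in `-log f_{i,j}(z)`: the paper's `m` is our `m + 1`.
noncomputable def ffCoeff (x r : ℝ) (i j m : ℕ) : ℝ :=
  qint x ((r - 1) * (m + 1)) * qint x (r * (m + 1)) * qint x ((min i j : ℝ) * (m + 1)) *
      qint x ((r + 1 - (max i j : ℝ)) * (m + 1)) /
      (qint x ((m : ℝ) + 1) * qint x ((r + 1) * (m + 1))) * (x - x⁻¹) ^ 2

section Fusion

variable {x r : ℝ}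

theorem ff_eq_exp (i j : ℕ) (z : ℂ) :
    ff x r i j z =
      Complex.exp (-∑' m : ℕ, (ffCoeff x r i j m : ℂ) * z ^ (m + 1) / ((m : ℂ) + 1)) :=
  rfl

theorem ffCoeff_eq_sum (hx : 0 < x) {i j : ℕ} (hij : i ≤ j) (hj : 1 ≤ j) (m : ℕ) :
    ffCoeff x r i j m =
      ∑ k ∈ Icc 1 i, ffCoeff x r 1 j m * (x ^ (2 * (k : ℤ) - i - 1)) ^ (m + 1) := by
  have hpow (k : ℕ) :
      x ^ ((2 * (k : ℝ) - i - 1) * (m + 1)) = (x ^ (2 * (k : ℤ) - i - 1)) ^ (m + 1) := by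
    rw [← Real.rpow_intCast, ← Real.rpow_mul_natCast hx.le]
    push_cast; rfl
  have hij' : (i : ℝ) ≤ j := by exact_mod_cast hij
  have hj' : (1 : ℝ) ≤ j := by exact_mod_cast hj
  simp only [ffCoeff, ← mul_sum, ← hpow, min_eq_left hij', max_eq_right hij', Nat.cast_one,
    min_eq_left hj', max_eq_right hj', one_mul, qint_natCast_mul hx]
  ring

theorem exists_abs_ffCoeff_le (hx0 : 0 < x) (hx1 : x < 1) (hr : 0 ≤ r) (i j : ℕ) :
    ∃ C ρ : ℝ, 0 ≤ ρ ∧ ∀ m, |ffCoeff x r i j m| ≤ C * ρ ^ (m + 1) := by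
  set K := 2 / |x - x⁻¹|
  refine ⟨K ^ 4 * (x - x⁻¹) ^ 2,
    x ^ (-|r - 1|) * x ^ (-|r|) * x ^ (-|(min i j : ℝ)|) * x ^ (-|r + 1 - (max i j : ℝ)|),
    by positivity, fun m => ?_⟩
  have hbound (c : ℝ) := abs_qint_mul_succ_le hx0 hx1.le c m
  have hden : 1 ≤ qint x ((m : ℝ) + 1) * qint x ((r + 1) * (m + 1)) := by
    have hm : (1 : ℝ) ≤ m + 1 := by simp
    nlinarith [one_le_qint hx0 hx1 hm, one_le_qint hx0 hx1 (a := (r + 1) * (m + 1)) (by nlinarith)]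
  rw [ffCoeff, abs_mul, abs_div, abs_of_pos (zero_lt_one.trans_le hden), abs_sq]
  calc _ ≤ |qint x ((r - 1) * (m + 1)) * qint x (r * (m + 1)) *
          qint x ((min i j : ℝ) * (m + 1)) * qint x ((r + 1 - (max i j : ℝ)) * (m + 1))| *
          (x - x⁻¹) ^ 2 := by
        gcongr; exact div_le_self (abs_nonneg _) hden
    _ ≤ (K * (x ^ (-|r - 1|)) ^ (m + 1)) * (K * (x ^ (-|r|)) ^ (m + 1)) *
          (K * (x ^ (-|(min i j : ℝ)|)) ^ (m + 1)) *
          (K * (x ^ (-|r + 1 - (max i j : ℝ)|)) ^ (m + 1)) *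
          (x - x⁻¹) ^ 2 := by
        simp only [abs_mul]
        gcongr <;> apply hbound
    _ = _ := by ring

theorem exists_summable_ff_series (hx0 : 0 < x) (hx1 : x < 1) (hr : 0 ≤ r) (i j : ℕ) :
    ∃ R > 0, ∀ w : ℂ, ‖w‖ < R →
      Summable fun m : ℕ => (ffCoeff x r i j m : ℂ) * w ^ (m + 1) / ((m : ℂ) + 1) := by
  obtain ⟨C, ρ, hρ, hC⟩ := exists_abs_ffCoeff_le hx0 hx1 hr i j
  refine ⟨1 / (ρ + 1), by positivity, fun w hw => summable_ofReal_mul_pow_succ_div hρ hC ?_⟩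
  rw [lt_div_iff₀ (by positivity)] at hw
  nlinarith [norm_nonneg w]

end Fusion

/-- `f_{i,j}(z) = ∏_{k=1}^i f_{1,j}(x^{-i-1+2k} z)` for `1 ≤ i ≤ j`. -/
theorem f_fusion_product (x : ℝ) (hx0 : 0 < x) (hx1 : x < 1) (r : ℝ) (hr : 1 < r)
    (i j : ℕ) (hi : 1 ≤ i) (hij : i ≤ j) :
    ∃ ε > 0, ∀ z : ℂ, ‖z‖ < ε →
      ff x r i j z
        = ∏ k ∈ Finset.Icc 1 i, ff x r 1 j (((x ^ (2 * (k : ℤ) - i - 1) : ℝ) : ℂ) * z) := by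
  obtain ⟨R, hR, hsum⟩ := exists_summable_ff_series hx0 hx1 (by linarith : 0 ≤ r) 1 j
  refine ⟨R * x ^ i, by positivity, fun z hz => ?_⟩
  have hnorm (k : ℕ) (hk : k ∈ Icc 1 i) : ‖((x ^ (2 * (k : ℤ) - i - 1) : ℝ) : ℂ) * z‖ < R := by
    have hle : x ^ (2 * (k : ℤ) - i - 1) ≤ x ^ (-(i : ℤ)) :=
      zpow_le_zpow_right_of_le_one₀ hx0 hx1.le (by linarith [(mem_Icc.mp hk).1])
    rw [norm_mul, Complex.norm_real, Real.norm_of_nonneg (by positivity)]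
    calc x ^ (2 * (k : ℤ) - i - 1) * ‖z‖ ≤ x ^ (-(i : ℤ)) * ‖z‖ := by gcongr
      _ < x ^ (-(i : ℤ)) * (R * x ^ i) := by gcongr
      _ = R := by rw [zpow_neg, zpow_natCast]; field_simp
  simp only [ff_eq_exp]
  rw [← Complex.exp_sum, sum_neg_distrib,
    ← Summable.tsum_finsetSum fun k hk => hsum _ (hnorm k hk)]
  congr 2
  refine tsum_congr fun m => ?_
  rw [ffCoeff_eq_sum hx0 hij (hi.trans hij), Complex.ofReal_sum, sum_mul, sum_div]
  refine sum_congr rfl fun k _ => ?_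
  push_cast
  ring
end

section
/- With $0<|x|<1$, $r>1$, $s=r+1$, $f_{i,j}(z)$ and $\Delta_1(z)$ as in the $\mathcal{W}_{q,t}(\mathfrak{sl}(2|1))$ setting, the fusion relation $f_{1,i}(z) f_{1,j}(x^{i+j} z) = f_{1,i+j}(x^j z)\, \Delta_1(x^i z)$ holds for all $i,j \geq 1$, as an identity of formal power series in $z$. -/
/-!
Write `f_{1,k}(w) = exp (-∑ c_k(m) w^(m+1)/(m+1))` and, from the Taylor series of `log (1 - u)`,
`Δ₁(w) = exp (-∑ d(m) w^(m+1)/(m+1))` with `d(m) = a^(m+1) + b^(m+1) - x^(m+1) - x^(-(m+1))` for the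
roots `a = x^(2r-1)`, `b = x^(1-2r)`. The fusion relation then reduces, coefficient by coefficient,
to `c_i + c_j y^(i+j) = c_(i+j) y^j + d y^i` with `y = x^(m+1)`. In the variables `y`, `A = y^r`
and `S = y^k` the coefficient `c_k(m)` is the rational function `coeffRat y A S`, so this is a
polynomial identity once denominators are cleared. The same closed form gives
`|c_k(m)| ≤ (1 - x²)⁻¹ x^(-(2r+1+k)(m+1))`, so all series converge for `‖z‖ < x^(2r+1+i+j)`.
-/

noncomputable def logTerm (c : ℕ → ℝ) (w : ℂ) (m : ℕ) : ℂ :=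
  (c m : ℂ) * w ^ (m + 1) / ((m : ℂ) + 1)

noncomputable def logSeries (c : ℕ → ℝ) (w : ℂ) : ℂ :=
  ∑' m : ℕ, logTerm c w m

theorem summable_logSeries_of_abs_le {c : ℕ → ℝ} {K ρ : ℝ} (hρ : 0 ≤ ρ)
    (hc : ∀ m, |c m| ≤ K * ρ ^ (m + 1)) {w : ℂ} (hw : ‖w‖ * ρ < 1) :
    Summable (logTerm c w) := by
  have hgeom : Summable (fun m : ℕ => K * (‖w‖ * ρ) ^ (m + 1)) :=
    ((summable_geometric_of_lt_one (by positivity) hw).mul_left (K * (‖w‖ * ρ))).congr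
      fun m => by ring
  refine hgeom.of_norm_bounded fun m => ?_
  have hm : (1 : ℝ) ≤ ‖(m : ℂ) + 1‖ := by
    rw [← Nat.cast_add_one, Complex.norm_natCast]
    exact_mod_cast m.succ_pos
  calc ‖logTerm c w m‖
      ≤ |c m| * ‖w‖ ^ (m + 1) := by
        rw [logTerm, norm_div, norm_mul, norm_pow, Complex.norm_real, Real.norm_eq_abs]
        exact div_le_self (by positivity) hm
    _ ≤ K * ρ ^ (m + 1) * ‖w‖ ^ (m + 1) := by gcongr; exact hc m
    _ = K * (‖w‖ * ρ) ^ (m + 1) := by ring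

theorem logSeries_add_logSeries {c₁ c₂ c₃ c₄ : ℕ → ℝ} {s₂ s₃ s₄ : ℝ}
    (hc : ∀ m, c₁ m + c₂ m * s₂ ^ (m + 1) = c₃ m * s₃ ^ (m + 1) + c₄ m * s₄ ^ (m + 1)) {z : ℂ}
    (h₁ : Summable (logTerm c₁ z)) (h₂ : Summable (logTerm c₂ (s₂ * z)))
    (h₃ : Summable (logTerm c₃ (s₃ * z))) (h₄ : Summable (logTerm c₄ (s₄ * z))) :
    logSeries c₁ z + logSeries c₂ (s₂ * z) = logSeries c₃ (s₃ * z) + logSeries c₄ (s₄ * z) := by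
  rw [logSeries, logSeries, logSeries, logSeries, ← h₁.tsum_add h₂, ← h₃.tsum_add h₄]
  congr 1 with m
  have hcm := congrArg (fun t : ℝ => (t : ℂ) * z ^ (m + 1) / ((m : ℂ) + 1)) (hc m)
  simp only [logTerm, mul_pow]
  push_cast at hcm
  linear_combination hcm

theorem exists_hasSum_log_ratio {a b c d w : ℂ} (ha : ‖a * w‖ < 1) (hb : ‖b * w‖ < 1)
    (hc : ‖c * w‖ < 1) (hd : ‖d * w‖ < 1) :
    ∃ V, HasSum (fun m : ℕ => (a ^ (m + 1) + b ^ (m + 1) - c ^ (m + 1) - d ^ (m + 1)) *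
        w ^ (m + 1) / ((m : ℂ) + 1)) V ∧
      Complex.exp (-V) = (1 - a * w) * (1 - b * w) / ((1 - c * w) * (1 - d * w)) := by
  have hne : ∀ u : ℂ, ‖u‖ < 1 → 1 - u ≠ 0 := fun u hu h => by
    rw [← eq_of_sub_eq_zero h, norm_one] at hu
    exact hu.false
  have hsum := (((Complex.hasSum_taylorSeries_neg_log' ha).add
    (Complex.hasSum_taylorSeries_neg_log' hb)).sub (Complex.hasSum_taylorSeries_neg_log' hc)).sub
    (Complex.hasSum_taylorSeries_neg_log' hd)
  refine ⟨_, hsum.congr_fun fun m => by simp only [mul_pow]; ring, ?_⟩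
  simp only [sub_neg_eq_add, neg_add_rev, neg_neg, Complex.exp_add, Complex.exp_neg,
    Complex.exp_log (hne _ ha), Complex.exp_log (hne _ hb), Complex.exp_log (hne _ hc),
    Complex.exp_log (hne _ hd)]
  field_simp

noncomputable def coeffRat (y A S : ℝ) : ℝ :=
  (A ^ 2 - y ^ 2) * (A ^ 2 - 1) * (A ^ 2 * y ^ 2 - S ^ 2) / (A ^ 2 * y * S * (A ^ 2 * y ^ 2 - 1))

theorem coeffRat_fusion {y A B C : ℝ} (hy : y ≠ 0) (hA : A ≠ 0) (hB : B ≠ 0) (hC : C ≠ 0)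
    (hAy : A ^ 2 * y ^ 2 - 1 ≠ 0) :
    coeffRat y A B + coeffRat y A C * (B * C)
      = coeffRat y A (B * C) * C + (A ^ 2 / y + y / A ^ 2 - y - y⁻¹) * B := by
  unfold coeffRat
  field_simp
  ring

theorem abs_coeffRat_le {y A S : ℝ} (hy0 : 0 < y) (hy1 : y < 1) (hA0 : 0 < A) (hA1 : A < 1)
    (hS0 : 0 < S) (hS1 : S < 1) :
    |coeffRat y A S| ≤ ((1 - (A * y) ^ 2) * (A ^ 2 * y * S))⁻¹ := by
  have hAy : (A * y) ^ 2 < 1 := by nlinarith [mul_pos hA0 hy0, mul_lt_mul'' hA1 hy1 hA0.le hy0.le]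
  have hfac : ∀ a b : ℝ, 0 ≤ a → a ≤ 1 → 0 ≤ b → b ≤ 1 → |a - b| ≤ 1 := fun a b ha ha' hb hb' =>
    abs_sub_le_iff.2 ⟨by linarith, by linarith⟩
  have hnum : |(A ^ 2 - y ^ 2) * (A ^ 2 - 1) * (A ^ 2 * y ^ 2 - S ^ 2)| ≤ 1 := by
    rw [abs_mul, abs_mul]
    have h1 := hfac (A ^ 2) (y ^ 2) (by positivity) (by nlinarith) (by positivity) (by nlinarith)
    have h2 := hfac (A ^ 2) 1 (by positivity) (by nlinarith) zero_le_one le_rfl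
    have h3 := hfac (A ^ 2 * y ^ 2) (S ^ 2) (by positivity) (by nlinarith) (by positivity)
      (by nlinarith)
    simpa using mul_le_mul (mul_le_mul h1 h2 (abs_nonneg _) zero_le_one) h3 (abs_nonneg _)
      (by norm_num)
  have hden : |A ^ 2 * y * S * (A ^ 2 * y ^ 2 - 1)| = (1 - (A * y) ^ 2) * (A ^ 2 * y * S) := by
    rw [abs_of_neg (mul_neg_of_pos_of_neg (by positivity) (by nlinarith))]
    ring
  rw [coeffRat, abs_div, hden, inv_eq_one_div]
  gcongr

theorem qint_mul_eq {x : ℝ} (hx : 0 < x) (a t : ℝ) :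
    qint x (a * t) = ((x ^ t) ^ a - ((x ^ t) ^ a)⁻¹) / (x - x⁻¹) := by
  rw [qint, Real.rpow_neg hx.le, mul_comm, Real.rpow_mul hx.le]

noncomputable def fCoeff (x r : ℝ) (k m : ℕ) : ℝ :=
  qint x ((r - 1) * (m + 1)) * qint x (r * (m + 1)) * qint x ((min 1 k : ℝ) * (m + 1)) *
    qint x ((r + 1 - (max 1 k : ℝ)) * (m + 1)) /
    (qint x ((m : ℝ) + 1) * qint x ((r + 1) * (m + 1))) * (x - x⁻¹) ^ 2

theorem ff_one_eq_exp (x r : ℝ) (k : ℕ) (w : ℂ) :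
    ff x r 1 k w = Complex.exp (-logSeries (fCoeff x r k) w) := by
  simp only [ff, logSeries, logTerm, fCoeff, Nat.cast_one]

theorem fCoeff_eq_coeffRat {x r : ℝ} (hx0 : 0 < x) (hx1 : x < 1) {k : ℕ}
    (hk : 1 ≤ k) (m : ℕ) :
    fCoeff x r k m = coeffRat (x ^ (m + 1)) ((x ^ (m + 1)) ^ r) ((x ^ (m + 1)) ^ k) := by
  have hk' : (1 : ℝ) ≤ k := by exact_mod_cast hk
  have hcast : ((m : ℝ) + 1) = ((m + 1 : ℕ) : ℝ) := by push_cast; ring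
  set y := x ^ (m + 1)
  have hy0 : 0 < y := by positivity
  have hy1 : y < 1 := pow_lt_one₀ hx0.le hx1 (Nat.succ_ne_zero m)
  have hxy : x ^ ((m : ℝ) + 1) = y := by rw [hcast, Real.rpow_natCast]
  have hq : ∀ a : ℝ, qint x (a * ((m : ℝ) + 1)) = (y ^ a - (y ^ a)⁻¹) / (x - x⁻¹) := by
    intro a; rw [qint_mul_eq hx0, hxy]
  have hq1 : qint x ((m : ℝ) + 1) = (y - y⁻¹) / (x - x⁻¹) := by
    simpa using hq 1
  rw [fCoeff, min_eq_left hk', max_eq_right hk', hq, hq, hq, hq, hq, hq1,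
    Real.rpow_sub hy0, Real.rpow_sub hy0, Real.rpow_add hy0, Real.rpow_natCast, Real.rpow_one]
  unfold coeffRat
  have hx2 : x ^ 2 - 1 ≠ 0 := by nlinarith
  have hy2 : y ^ 2 - 1 ≠ 0 := by nlinarith
  field_simp

noncomputable def deltaCoeff (x r : ℝ) (m : ℕ) : ℝ :=
  (x ^ (2 * r - 1)) ^ (m + 1) + (x ^ (1 - 2 * r)) ^ (m + 1) - x ^ (m + 1) - x⁻¹ ^ (m + 1)

theorem fCoeff_fusion {x r : ℝ} (hx0 : 0 < x) (hx1 : x < 1) (hr : -1 < r) {i j : ℕ} (hi : 1 ≤ i)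
    (hj : 1 ≤ j) (m : ℕ) :
    fCoeff x r i m + fCoeff x r j m * (x ^ (i + j)) ^ (m + 1)
      = fCoeff x r (i + j) m * (x ^ j) ^ (m + 1) + deltaCoeff x r m * (x ^ i) ^ (m + 1) := by
  rw [fCoeff_eq_coeffRat hx0 hx1 hi, fCoeff_eq_coeffRat hx0 hx1 hj,
    fCoeff_eq_coeffRat hx0 hx1 (hi.trans (Nat.le_add_right i j)), deltaCoeff]
  set y := x ^ (m + 1)
  have hy0 : 0 < y := by positivity
  have hA0 : 0 < y ^ r := Real.rpow_pos_of_pos hy0 r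
  have hpow : ∀ n : ℕ, (x ^ n) ^ (m + 1) = y ^ n := fun n => by rw [← pow_mul, mul_comm, pow_mul]
  have hδ₁ : (x ^ (2 * r - 1)) ^ (m + 1) = (y ^ r) ^ 2 / y := by
    rw [Real.rpow_pow_comm hx0.le, Real.rpow_sub hy0, Real.rpow_one, mul_comm,
      Real.rpow_mul hy0.le, Real.rpow_two]
  have hδ₂ : (x ^ (1 - 2 * r)) ^ (m + 1) = y / (y ^ r) ^ 2 := by
    rw [Real.rpow_pow_comm hx0.le, Real.rpow_sub hy0, Real.rpow_one, mul_comm,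
      Real.rpow_mul hy0.le, Real.rpow_two]
  rw [hpow, hpow, hpow, pow_add, inv_pow, hδ₁, hδ₂]
  have hAy : y ^ r * y < 1 := by
    rw [← Real.rpow_add_one hy0.ne']
    exact Real.rpow_lt_one hy0.le (pow_lt_one₀ hx0.le hx1 m.succ_ne_zero) (by linarith)
  exact coeffRat_fusion hy0.ne' hA0.ne' (by positivity) (by positivity)
    (by nlinarith [mul_pos hA0 hy0])

theorem abs_fCoeff_le {x r : ℝ} (hx0 : 0 < x) (hx1 : x < 1) (hr : 0 < r) {k : ℕ} (hk : 1 ≤ k)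
    (m : ℕ) : |fCoeff x r k m| ≤ (1 - x ^ 2)⁻¹ * ((x ^ (2 * r + 1 + k))⁻¹) ^ (m + 1) := by
  rw [fCoeff_eq_coeffRat hx0 hx1 hk]
  set y := x ^ (m + 1) with hy
  have hy0 : 0 < y := by positivity
  have hyx : y ≤ x := pow_le_of_le_one hx0.le hx1.le m.succ_ne_zero
  have hy1 : y < 1 := hyx.trans_lt hx1
  have hA0 : 0 < y ^ r := Real.rpow_pos_of_pos hy0 r
  have hA1 : y ^ r < 1 := Real.rpow_lt_one hy0.le hy1 hr
  have hS1 : y ^ k < 1 := pow_lt_one₀ hy0.le hy1 (by omega)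
  have hden : (x ^ (2 * r + 1 + k)) ^ (m + 1) = (y ^ r) ^ 2 * y * y ^ k := by
    rw [Real.rpow_pow_comm hx0.le, ← hy, Real.rpow_add hy0, Real.rpow_add hy0, Real.rpow_one,
      Real.rpow_natCast, mul_comm 2 r, Real.rpow_mul hy0.le, Real.rpow_two]
  refine (abs_coeffRat_le hy0 hy1 hA0 hA1 (by positivity) hS1).trans ?_
  rw [inv_pow, ← mul_inv, hden]
  have hAy : y ^ r * y ≤ x := by nlinarith
  have hx2 : 0 < 1 - x ^ 2 := by nlinarith
  exact inv_anti₀ (by positivity)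
    (mul_le_mul_of_nonneg_right (by nlinarith [mul_pos hA0 hy0]) (by positivity))

theorem summable_fCoeff {x r : ℝ} (hx0 : 0 < x) (hx1 : x < 1) (hr : 0 < r) {k : ℕ} (hk : 1 ≤ k)
    {w : ℂ} (hw : ‖w‖ < x ^ (2 * r + 1 + k)) :
    Summable (logTerm (fCoeff x r k) w) := by
  have hpos : 0 < x ^ (2 * r + 1 + k) := Real.rpow_pos_of_pos hx0 _
  exact summable_logSeries_of_abs_le (by positivity) (abs_fCoeff_le hx0 hx1 hr hk)
    ((mul_inv_lt_iff₀ hpos).2 (by simpa using hw))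

theorem exists_hasSum_deltaCoeff {x r : ℝ} (hx0 : 0 < x) (hx1 : x < 1) (hr : 1 ≤ r) {w : ℂ}
    (hw : ‖w‖ < x ^ (2 * r - 1)) :
    ∃ V, HasSum (logTerm (deltaCoeff x r) w) V ∧ Complex.exp (-V) = Dlt x r 1 w := by
  have hroot : ∀ e : ℝ, 1 - 2 * r ≤ e → ‖((x ^ e : ℝ) : ℂ) * w‖ < 1 := fun e he => by
    rw [norm_mul, Complex.norm_real, Real.norm_of_nonneg (by positivity)]
    calc x ^ e * ‖w‖ ≤ x ^ (1 - 2 * r) * ‖w‖ := by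
          gcongr ?_ * _
          exact Real.rpow_le_rpow_of_exponent_ge hx0 hx1.le he
      _ < x ^ (1 - 2 * r) * x ^ (2 * r - 1) := by gcongr
      _ = 1 := by rw [← Real.rpow_add hx0]; norm_num
  obtain ⟨V, hV, hexp⟩ := exists_hasSum_log_ratio (hroot (2 * r - 1) (by linarith))
    (hroot (1 - 2 * r) le_rfl) (hroot 1 (by linarith)) (hroot (-1) (by linarith))
  refine ⟨V, hV.congr_fun fun m => ?_, ?_⟩
  · simp only [logTerm, deltaCoeff, Real.rpow_one, Real.rpow_neg_one]
    push_cast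
    ring
  · rw [hexp, Dlt]
    norm_num

/-- Fusion relation `f_{1,i}(z) f_{1,j}(x^{i+j} z) = f_{1,i+j}(x^j z) Δ_1(x^i z)` for `i,j ≥ 1`. -/
theorem f_fusion_two (x : ℝ) (hx0 : 0 < x) (hx1 : x < 1) (r : ℝ) (hr : 1 < r)
    (i j : ℕ) (hi : 1 ≤ i) (hj : 1 ≤ j) :
    ∃ ε > 0, ∀ z : ℂ, ‖z‖ < ε →
      ff x r 1 i z * ff x r 1 j (((x ^ (i + j) : ℝ) : ℂ) * z)
        = ff x r 1 (i + j) (((x ^ j : ℝ) : ℂ) * z) * Dlt x r 1 (((x ^ i : ℝ) : ℂ) * z) := by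
  set ε := x ^ (2 * r + 1 + ((i + j : ℕ) : ℝ))
  have hε : ∀ p ≤ 2 * r + 1 + ((i + j : ℕ) : ℝ), ε ≤ x ^ p := fun p hp =>
    Real.rpow_le_rpow_of_exponent_ge hx0 hx1.le hp
  refine ⟨ε, Real.rpow_pos_of_pos hx0 _, fun z hz => ?_⟩
  have hshift : ∀ n : ℕ, ‖((x ^ n : ℝ) : ℂ) * z‖ < ε := fun n => by
    rw [norm_mul, Complex.norm_real, Real.norm_of_nonneg (by positivity)]
    exact (mul_le_of_le_one_left (norm_nonneg z) (pow_le_one₀ hx0.le hx1.le)).trans_lt hz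
  have hij : 1 ≤ i + j := hi.trans (Nat.le_add_right i j)
  obtain ⟨Λ, hΛ, hΔ⟩ := exists_hasSum_deltaCoeff hx0 hx1 hr.le
    ((hshift i).trans_le (hε _ (by push_cast; linarith)))
  have hlog : logSeries (fCoeff x r i) z + logSeries (fCoeff x r j) (((x ^ (i + j) : ℝ) : ℂ) * z)
      = logSeries (fCoeff x r (i + j)) (((x ^ j : ℝ) : ℂ) * z) + Λ := by
    rw [← hΛ.tsum_eq]
    exact logSeries_add_logSeries (fCoeff_fusion hx0 hx1 (by linarith) hi hj)
      (summable_fCoeff hx0 hx1 (by linarith) hi (hz.trans_le (hε _ (by push_cast; linarith))))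
      (summable_fCoeff hx0 hx1 (by linarith) hj
        ((hshift _).trans_le (hε _ (by push_cast; linarith))))
      (summable_fCoeff hx0 hx1 (by linarith) hij ((hshift _).trans_le (hε _ le_rfl)))
      hΛ.summable
  rw [ff_one_eq_exp, ff_one_eq_exp, ff_one_eq_exp, ← hΔ, ← Complex.exp_add, ← Complex.exp_add,
    ← neg_add, ← neg_add, hlog]
end

section
/- Let $0<x<1$, $r>1$, $s=r+1$, and let $f_{i,j}(z)$ be the structure functions of $\mathcal{W}_{q,t}(\mathfrak{sl}(2|1))$. Then $f_{i,j}(z) = f_{j,i}(z)$ for all $i,j \geq 1$, and $f_{1,i}(z) f_{j,i}(x^{j+1} z) = f_{j+1,i}(x^j z)\,\Delta_1(x^i z)$ for $1 \leq i \leq j$, as formal power series in $z$. -/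
open Real

noncomputable def coefQ (x r : ℝ) (i j : ℕ) (m : ℕ) : ℝ :=
  qint x ((r - 1) * (m + 1)) * qint x (r * (m + 1)) * qint x ((min i j : ℝ) * (m + 1)) *
        qint x ((r + 1 - (max i j : ℝ)) * (m + 1)) /
        (qint x ((m : ℝ) + 1) * qint x ((r + 1) * (m + 1))) * (x - x⁻¹) ^ 2

noncomputable def dQ (x r : ℝ) (m : ℕ) : ℝ :=
  qint x ((r - 1) * (m + 1)) * qint x (r * (m + 1)) * (x - x⁻¹) ^ 2

lemma ff_eq (x r : ℝ) (i j : ℕ) (z : ℂ) :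
    ff x r i j z
      = Complex.exp (-∑' m : ℕ, ((coefQ x r i j m : ℝ) : ℂ) * z ^ (m + 1) / ((m : ℂ) + 1)) := rfl

section aux
variable {x r : ℝ}
lemma qint_eq (hx0 : 0 < x) (a : ℝ) : qint x a = (x ^ a - (x ^ a)⁻¹) / (x - x⁻¹) := by
  unfold qint; rw [Real.rpow_neg hx0.le]
lemma hxneg (hx0 : 0 < x) (hx1 : x < 1) : x - x⁻¹ < 0 := by
  have h : 1 < x⁻¹ := (one_lt_inv₀ hx0).mpr hx1
  linarith
lemma hxne (hx0 : 0 < x) (hx1 : x < 1) : x - x⁻¹ ≠ 0 := (hxneg hx0 hx1).ne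

set_option maxHeartbeats 2000000 in

lemma hxposinv (hx0 : 0 < x) (hx1 : x < 1) : 0 < x⁻¹ - x := by linarith [hxneg hx0 hx1]

lemma qint_abs_le (hx0 : 0 < x) (hx1 : x < 1) (a : ℝ) :
    |qint x a| ≤ 2 * x ^ (-|a|) / (x⁻¹ - x) := by
  unfold qint
  rw [abs_div, abs_of_neg (hxneg hx0 hx1), neg_sub]
  apply (div_le_div_iff_of_pos_right (hxposinv hx0 hx1)).mpr
  have h1 : x ^ a ≤ x ^ (-|a|) := rpow_le_rpow_of_exponent_ge hx0 hx1.le (neg_abs_le a)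
  have h2 : x ^ (-a) ≤ x ^ (-|a|) := rpow_le_rpow_of_exponent_ge hx0 hx1.le (by
    rcases abs_cases a with ⟨h, _⟩ | ⟨h, _⟩ <;> simp [h] <;> linarith)
  have p1 : (0:ℝ) < x ^ a := rpow_pos_of_pos hx0 a
  have p2 : (0:ℝ) < x ^ (-a) := rpow_pos_of_pos hx0 (-a)
  rw [abs_le]
  constructor <;> nlinarith

lemma qint_ge (hx0 : 0 < x) (hx1 : x < 1) {a : ℝ} (ha : 1 ≤ a) :
    x ^ (1 - a) ≤ qint x a := by
  unfold qint
  rw [le_div_iff_of_neg (hxneg hx0 hx1)]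
  have h1 : x ^ a ≤ x ^ (2 - a) := rpow_le_rpow_of_exponent_ge hx0 hx1.le (by linarith)
  have h2 : x ^ (2 - a) = x ^ (1 - a) * x := by
    rw [← Real.rpow_add_one hx0.ne' (1 - a)]; ring_nf
  have h3 : x ^ (1 - a) * x⁻¹ = x ^ (-a) := by
    rw [← Real.rpow_neg_one x, ← Real.rpow_add hx0]; ring_nf
  nlinarith [rpow_pos_of_pos hx0 (1 - a), rpow_pos_of_pos hx0 (-a)]

lemma qint_pos (hx0 : 0 < x) (hx1 : x < 1) {a : ℝ} (ha : 1 ≤ a) : 0 < qint x a :=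
  lt_of_lt_of_le (rpow_pos_of_pos hx0 _) (qint_ge hx0 hx1 ha)

/-- Bound: |coefQ| ≤ C * t^(m+1). -/

lemma dQ_eq (hx0 : 0 < x) (hx1 : x < 1) (r : ℝ) (m : ℕ) :
    dQ x r m = (x ^ (2*r-1)) ^ (m+1) + (x ^ (1-2*r)) ^ (m+1) - x ^ (m+1) - (x⁻¹) ^ (m+1) := by
  have hM : ((m:ℝ) + 1) = ((m+1 : ℕ) : ℝ) := by push_cast; ring
  have e0 : x ^ ((m:ℝ) + 1) = x ^ (m+1 : ℕ) := by rw [hM, Real.rpow_natCast]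
  have key : ∀ c : ℝ, x ^ (c * ((m:ℝ)+1)) = (x ^ c) ^ (m+1 : ℕ) := by
    intro c
    rw [Real.rpow_mul hx0.le, hM, Real.rpow_natCast]
  have h1 : x ^ ((r-1) * ((m:ℝ)+1)) * x ^ (r * ((m:ℝ)+1)) = (x ^ (2*r-1)) ^ (m+1) := by
    rw [← Real.rpow_add hx0, show (r-1)*((m:ℝ)+1) + r*((m:ℝ)+1) = (2*r-1)*((m:ℝ)+1) by ring,
      key]
  have h2 : x ^ (-((r-1) * ((m:ℝ)+1))) * x ^ (-(r * ((m:ℝ)+1))) = (x ^ (1-2*r)) ^ (m+1) := by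
    rw [← Real.rpow_add hx0, show -((r-1)*((m:ℝ)+1)) + -(r*((m:ℝ)+1)) = (1-2*r)*((m:ℝ)+1) by ring,
      key]
  have h3 : x ^ ((r-1) * ((m:ℝ)+1)) * x ^ (-(r * ((m:ℝ)+1))) = (x⁻¹) ^ (m+1) := by
    rw [← Real.rpow_add hx0, show (r-1)*((m:ℝ)+1) + -(r*((m:ℝ)+1)) = (-1)*((m:ℝ)+1) by ring,
      key, Real.rpow_neg_one]
  have h4 : x ^ (-((r-1) * ((m:ℝ)+1))) * x ^ (r * ((m:ℝ)+1)) = x ^ (m+1 : ℕ) := by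
    rw [← Real.rpow_add hx0, show -((r-1)*((m:ℝ)+1)) + r*((m:ℝ)+1) = 1*((m:ℝ)+1) by ring,
      key, Real.rpow_one]
  have hw := hxne hx0 hx1
  have gen : ∀ A B : ℝ, (A / (x-x⁻¹)) * (B/(x-x⁻¹)) * (x-x⁻¹)^2 = A * B := by
    intro A B
    rw [div_mul_div_comm, div_mul_eq_mul_div, sq,
      div_eq_iff (mul_ne_zero hw hw), mul_comm (x - x⁻¹) (x - x⁻¹)]
  have expand : dQ x r m = (x ^ ((r-1) * ((m:ℝ)+1)) - x ^ (-((r-1) * ((m:ℝ)+1)))) *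
      (x ^ (r * ((m:ℝ)+1)) - x ^ (-(r * ((m:ℝ)+1)))) := by
    unfold dQ qint; exact gen _ _
  rw [expand]
  linear_combination h1 + h2 - h3 - h4

lemma coefQ_bound (hx0 : 0 < x) (hx1 : x < 1) (hr : 1 < r) (i j : ℕ) :
    ∃ C > 0, ∃ t > 0, ∀ m : ℕ, |coefQ x r i j m| ≤ C * t ^ (m+1) := by
  set c0 : ℝ := 2 / (x⁻¹ - x) with hc0def
  have hc0 : 0 < c0 := div_pos two_pos (hxposinv hx0 hx1)
  set S : ℝ := |r - 1| + |r| + |(min i j : ℝ)| + |r + 1 - (max i j : ℝ)| with hSdef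
  refine ⟨c0^4 * (x⁻¹ - x)^2 * x ^ (-2 : ℝ),
    mul_pos (mul_pos (pow_pos hc0 4) (pow_pos (hxposinv hx0 hx1) 2)) (rpow_pos_of_pos hx0 _),
    x ^ (r + 2 - S), rpow_pos_of_pos hx0 _, ?_⟩
  intro m
  have hM1 : (1:ℝ) ≤ (m:ℝ) + 1 := by
    have : (0:ℝ) ≤ m := Nat.cast_nonneg m
    linarith
  have hMpos : (0:ℝ) < (m:ℝ) + 1 := by linarith
  have habs : ∀ a : ℝ, |qint x (a * ((m:ℝ)+1))| ≤ c0 * x ^ (-(|a| * ((m:ℝ)+1))) := by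
    intro a
    have h := qint_abs_le hx0 hx1 (a * ((m:ℝ)+1))
    rw [abs_mul, abs_of_pos hMpos] at h
    calc |qint x (a * ((m:ℝ)+1))| ≤ 2 * x ^ (-(|a| * ((m:ℝ)+1))) / (x⁻¹ - x) := h
      _ = c0 * x ^ (-(|a| * ((m:ℝ)+1))) := by rw [hc0def]; ring
  have hden1 : x ^ (1 - ((m:ℝ)+1)) ≤ qint x ((m:ℝ)+1) := qint_ge hx0 hx1 hM1
  have hden2 : x ^ (1 - (r+1) * ((m:ℝ)+1)) ≤ qint x ((r+1) * ((m:ℝ)+1)) :=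
    qint_ge hx0 hx1 (by nlinarith)
  have hq1 := habs (r - 1)
  have hq2 := habs r
  have hq3 := habs (min i j : ℝ)
  have hq4 := habs (r + 1 - (max i j : ℝ))
  have hprod : x ^ (-(S * ((m:ℝ)+1)))
      = x ^ (-(|r-1| * ((m:ℝ)+1))) * x ^ (-(|r| * ((m:ℝ)+1)))
        * x ^ (-(|(min i j : ℝ)| * ((m:ℝ)+1))) * x ^ (-(|r + 1 - (max i j : ℝ)| * ((m:ℝ)+1))) := by
    rw [← Real.rpow_add hx0, ← Real.rpow_add hx0, ← Real.rpow_add hx0]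
    congr 1
    rw [hSdef]; ring
  have hnum : |qint x ((r - 1) * ((m:ℝ) + 1)) * qint x (r * ((m:ℝ) + 1)) * qint x ((min i j : ℝ) * ((m:ℝ) + 1)) *
      qint x ((r + 1 - (max i j : ℝ)) * ((m:ℝ) + 1))|
      ≤ c0^4 * x ^ (-(S * ((m:ℝ)+1))) := by
    rw [abs_mul, abs_mul, abs_mul, hprod]
    calc |qint x ((r - 1) * ((m:ℝ) + 1))| * |qint x (r * ((m:ℝ) + 1))| * |qint x ((min i j : ℝ) * ((m:ℝ) + 1))| *
        |qint x ((r + 1 - (max i j : ℝ)) * ((m:ℝ) + 1))|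
        ≤ (c0 * x ^ (-(|r-1| * ((m:ℝ)+1)))) * (c0 * x ^ (-(|r| * ((m:ℝ)+1))))
          * (c0 * x ^ (-(|(min i j : ℝ)| * ((m:ℝ)+1)))) * (c0 * x ^ (-(|r + 1 - (max i j : ℝ)| * ((m:ℝ)+1)))) := by
          apply mul_le_mul (mul_le_mul (mul_le_mul hq1 hq2 (abs_nonneg _) (by positivity))
            hq3 (abs_nonneg _) (by positivity)) hq4 (abs_nonneg _) (by positivity)
      _ = c0^4 * (x ^ (-(|r-1| * ((m:ℝ)+1))) * x ^ (-(|r| * ((m:ℝ)+1)))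
          * x ^ (-(|(min i j : ℝ)| * ((m:ℝ)+1))) * x ^ (-(|r + 1 - (max i j : ℝ)| * ((m:ℝ)+1)))) := by ring
  have hdenpos : 0 < qint x ((m:ℝ)+1) * qint x ((r+1) * ((m:ℝ)+1)) := by
    have p1 : (0:ℝ) < x ^ (1 - ((m:ℝ)+1)) := rpow_pos_of_pos hx0 _
    have p2 : (0:ℝ) < x ^ (1 - (r+1)*((m:ℝ)+1)) := rpow_pos_of_pos hx0 _
    exact mul_pos (lt_of_lt_of_le p1 hden1) (lt_of_lt_of_le p2 hden2)
  have hdenge : x ^ (2 - (r+2) * ((m:ℝ)+1)) ≤ qint x ((m:ℝ)+1) * qint x ((r+1) * ((m:ℝ)+1)) := by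
    have e : x ^ (2 - (r+2) * ((m:ℝ)+1)) = x ^ (1 - ((m:ℝ)+1)) * x ^ (1 - (r+1)*((m:ℝ)+1)) := by
      rw [← Real.rpow_add hx0]; congr 1; ring
    rw [e]
    exact mul_le_mul hden1 hden2 (rpow_pos_of_pos hx0 _).le
      (le_trans (rpow_pos_of_pos hx0 _).le hden1)
  have comb : x ^ (-(S * ((m:ℝ)+1))) * x ^ (-(2 - (r+2) * ((m:ℝ)+1)))
      = x ^ ((r+2-S) * ((m:ℝ)+1)) * x ^ (-2:ℝ) := by
    rw [← Real.rpow_add hx0, ← Real.rpow_add hx0]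
    congr 1; ring
  have e2 : (x ^ (r+2-S)) ^ (m+1) = x ^ ((r+2-S) * ((m:ℝ)+1)) := by
    rw [← Real.rpow_natCast (x ^ (r+2-S)) (m+1), ← Real.rpow_mul hx0.le]
    congr 1
    push_cast; ring
  unfold coefQ
  rw [abs_mul, abs_div, abs_of_pos hdenpos, abs_of_nonneg (sq_nonneg (x - x⁻¹))]
  calc |qint x ((r - 1) * ((m:ℝ) + 1)) * qint x (r * ((m:ℝ) + 1)) * qint x ((min i j : ℝ) * ((m:ℝ) + 1)) *
        qint x ((r + 1 - (max i j : ℝ)) * ((m:ℝ) + 1))| / (qint x ((m:ℝ)+1) * qint x ((r+1) * ((m:ℝ)+1)))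
        * (x - x⁻¹)^2
      ≤ (c0^4 * x ^ (-(S * ((m:ℝ)+1)))) / (x ^ (2 - (r+2) * ((m:ℝ)+1))) * (x - x⁻¹)^2 := by
        apply mul_le_mul_of_nonneg_right _ (sq_nonneg _)
        exact div_le_div₀ (by positivity) hnum (rpow_pos_of_pos hx0 _) hdenge
    _ = c0^4 * (x⁻¹ - x)^2 * x ^ (-2:ℝ) * (x ^ (r + 2 - S)) ^ (m+1) := by
        rw [div_eq_mul_inv, ← Real.rpow_neg hx0.le, e2]
        linear_combination (c0^4 * (x - x⁻¹)^2) * comb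

set_option maxHeartbeats 2000000 in
lemma keyid (hx0 : 0 < x) (hx1 : x < 1) (hr : 1 < r) (i k m : ℕ) (hi : 1 ≤ i) :
    coefQ x r 1 i m + coefQ x r (i+k) i m * x ^ ((i+k+1)*(m+1))
      = coefQ x r (i+k+1) i m * x ^ ((i+k)*(m+1)) + dQ x r m * x ^ (i*(m+1)) := by
  have hw := hxne hx0 hx1
  have hM : ((m:ℝ) + 1) = ((m+1 : ℕ) : ℝ) := by push_cast; ring
  have hMpos : (0:ℝ) < (m:ℝ) + 1 := by positivity
  obtain ⟨P, hP0, hP1, hPdef⟩ : ∃ P : ℝ, 0 < P ∧ P < 1 ∧ x ^ (m+1 : ℕ) = P :=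
    ⟨_, pow_pos hx0 _, pow_lt_one₀ hx0.le hx1 (Nat.succ_ne_zero m), rfl⟩
  obtain ⟨R, hR0, hRdef⟩ : ∃ R : ℝ, 0 < R ∧ x ^ (r * ((m:ℝ)+1)) = R :=
    ⟨_, rpow_pos_of_pos hx0 _, rfl⟩
  have e0 : x ^ ((m:ℝ) + 1) = P := by rw [hM, Real.rpow_natCast, hPdef]
  have ec : ∀ c : ℕ, x ^ ((c:ℝ) * ((m:ℝ)+1)) = P ^ c := by
    intro c
    rw [mul_comm, Real.rpow_mul hx0.le, e0, Real.rpow_natCast]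
  have E10 : x ^ ((r + 1) * ((m:ℝ)+1)) = R * P := by
    rw [show (r+1)*((m:ℝ)+1) = r*((m:ℝ)+1) + ((m:ℝ)+1) by ring, Real.rpow_add hx0, e0, hRdef]
  have hRP1 : R * P < 1 := by
    rw [← E10]
    exact Real.rpow_lt_one hx0.le hx1 (mul_pos (by linarith : (0:ℝ) < r + 1) hMpos)
  have hRP0 : 0 < R * P := mul_pos hR0 hP0
  have hd1 : P - P⁻¹ ≠ 0 := hxne hP0 hP1
  have hd2 : R * P - (R * P)⁻¹ ≠ 0 := hxne hRP0 hRP1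
  have hA : (P:ℝ) ^ i ≠ 0 := (pow_pos hP0 i).ne'
  have hB : (P:ℝ) ^ k ≠ 0 := (pow_pos hP0 k).ne'
  have hd1' : P * P - 1 ≠ 0 := by
    have h := mul_lt_mul'' hP1 hP1 hP0.le hP0.le
    rw [mul_one] at h
    exact (sub_neg.mpr h).ne
  have hd2' : R * P * (R * P) - 1 ≠ 0 := by
    have h := mul_lt_mul'' hRP1 hRP1 hRP0.le hRP0.le
    rw [mul_one] at h
    exact (sub_neg.mpr h).ne
  have hx2 : x * x - 1 ≠ 0 := by
    have h := mul_lt_mul'' hx1 hx1 hx0.le hx0.le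
    rw [mul_one] at h
    exact (sub_neg.mpr h).ne
  have E1 : x ^ ((r-1) * ((m:ℝ)+1)) = R / P := by
    rw [show (r-1)*((m:ℝ)+1) = r*((m:ℝ)+1) - ((m:ℝ)+1) by ring, Real.rpow_sub hx0, e0, hRdef]
  have E3 : x ^ ((1:ℝ) * ((m:ℝ)+1)) = P := by rw [one_mul, e0]
  have E4 : x ^ ((i:ℝ) * ((m:ℝ)+1)) = P ^ i := ec i
  have E5 : x ^ ((r + 1 - (i:ℝ)) * ((m:ℝ)+1)) = R * P / P ^ i := by
    rw [show (r+1-(i:ℝ))*((m:ℝ)+1) = (r*((m:ℝ)+1) + ((m:ℝ)+1)) - (i:ℝ)*((m:ℝ)+1) by ring,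
      Real.rpow_sub hx0, Real.rpow_add hx0, e0, ec, hRdef]
  have E6 : x ^ (((i:ℝ)+(k:ℝ)) * ((m:ℝ)+1)) = P ^ i * P ^ k := by
    rw [show ((i:ℝ)+(k:ℝ))*((m:ℝ)+1) = (i:ℝ)*((m:ℝ)+1) + (k:ℝ)*((m:ℝ)+1) by ring,
      Real.rpow_add hx0, ec, ec]
  have E7 : x ^ ((r + 1 - ((i:ℝ)+(k:ℝ))) * ((m:ℝ)+1)) = R * P / P ^ i / P ^ k := by
    rw [show (r+1-((i:ℝ)+(k:ℝ)))*((m:ℝ)+1)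
        = ((r*((m:ℝ)+1) + ((m:ℝ)+1)) - (i:ℝ)*((m:ℝ)+1)) - (k:ℝ)*((m:ℝ)+1) by ring,
      Real.rpow_sub hx0, Real.rpow_sub hx0, Real.rpow_add hx0, e0, ec, ec, hRdef]
  have E9 : x ^ ((r + 1 - ((i:ℝ)+(k:ℝ)+1)) * ((m:ℝ)+1)) = R / P ^ i / P ^ k := by
    rw [show (r+1-((i:ℝ)+(k:ℝ)+1))*((m:ℝ)+1)
        = (r*((m:ℝ)+1) - (i:ℝ)*((m:ℝ)+1)) - (k:ℝ)*((m:ℝ)+1) by ring,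
      Real.rpow_sub hx0, Real.rpow_sub hx0, ec, ec, hRdef]
  have N1 : x ^ ((i+k+1)*(m+1)) = P ^ i * P ^ k * P := by
    rw [mul_comm (i+k+1) (m+1), pow_mul, hPdef, pow_succ, pow_add]
  have N2 : x ^ ((i+k)*(m+1)) = P ^ i * P ^ k := by
    rw [mul_comm (i+k) (m+1), pow_mul, hPdef, pow_add]
  have N3 : x ^ (i*(m+1)) = P ^ i := by
    rw [mul_comm i (m+1), pow_mul, hPdef]
  have hk0 : (0:ℝ) ≤ (k:ℝ) := Nat.cast_nonneg k
  have hik : (i:ℝ) ≤ (i:ℝ) + (k:ℝ) := by linarith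
  have hik1 : (i:ℝ) ≤ (i:ℝ) + (k:ℝ) + 1 := by linarith
  have m1 : min (1:ℝ) (i:ℝ) = 1 := min_eq_left (by exact_mod_cast hi)
  have m2 : max (1:ℝ) (i:ℝ) = (i:ℝ) := max_eq_right (by exact_mod_cast hi)
  have m3 : min ((i:ℝ)+(k:ℝ)) (i:ℝ) = (i:ℝ) := min_eq_right hik
  have m4 : max ((i:ℝ)+(k:ℝ)) (i:ℝ) = (i:ℝ)+(k:ℝ) := max_eq_left hik
  have m5 : min ((i:ℝ)+(k:ℝ)+1) (i:ℝ) = (i:ℝ) := min_eq_right hik1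
  have m6 : max ((i:ℝ)+(k:ℝ)+1) (i:ℝ) = (i:ℝ)+(k:ℝ)+1 := max_eq_left hik1
  have F1 : x ^ (-((r-1) * ((m:ℝ)+1))) = P / R := by
    rw [show -((r-1)*((m:ℝ)+1)) = ((m:ℝ)+1) - r*((m:ℝ)+1) by ring, Real.rpow_sub hx0, e0, hRdef]
  have Fr : x ^ (-(r * ((m:ℝ)+1))) = 1 / R := by
    rw [show -(r*((m:ℝ)+1)) = 0 - r*((m:ℝ)+1) by ring, Real.rpow_sub hx0, Real.rpow_zero, hRdef]
  have F3 : x ^ (-((1:ℝ) * ((m:ℝ)+1))) = 1 / P := by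
    rw [show -((1:ℝ)*((m:ℝ)+1)) = 0 - ((m:ℝ)+1) by ring, Real.rpow_sub hx0, Real.rpow_zero, e0]
  have F4 : x ^ (-((i:ℝ) * ((m:ℝ)+1))) = 1 / P ^ i := by
    rw [show -((i:ℝ)*((m:ℝ)+1)) = 0 - (i:ℝ)*((m:ℝ)+1) by ring, Real.rpow_sub hx0,
      Real.rpow_zero, ec]
  have F5 : x ^ (-((r + 1 - (i:ℝ)) * ((m:ℝ)+1))) = P ^ i / (R * P) := by
    rw [show -((r+1-(i:ℝ))*((m:ℝ)+1)) = (i:ℝ)*((m:ℝ)+1) - (r*((m:ℝ)+1) + ((m:ℝ)+1)) by ring,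
      Real.rpow_sub hx0, Real.rpow_add hx0, e0, ec, hRdef]
  have F7 : x ^ (-((r + 1 - ((i:ℝ)+(k:ℝ))) * ((m:ℝ)+1))) = P ^ i * P ^ k / (R * P) := by
    rw [show -((r+1-((i:ℝ)+(k:ℝ)))*((m:ℝ)+1))
        = ((i:ℝ)*((m:ℝ)+1) + (k:ℝ)*((m:ℝ)+1)) - (r*((m:ℝ)+1) + ((m:ℝ)+1)) by ring,
      Real.rpow_sub hx0, Real.rpow_add hx0, Real.rpow_add hx0, e0, ec, ec, hRdef]
  have F9 : x ^ (-((r + 1 - ((i:ℝ)+(k:ℝ)+1)) * ((m:ℝ)+1))) = P ^ i * P ^ k / R := by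
    rw [show -((r+1-((i:ℝ)+(k:ℝ)+1))*((m:ℝ)+1))
        = ((i:ℝ)*((m:ℝ)+1) + (k:ℝ)*((m:ℝ)+1)) - r*((m:ℝ)+1) by ring,
      Real.rpow_sub hx0, Real.rpow_add hx0, ec, ec, hRdef]
  have F10 : x ^ (-((r + 1) * ((m:ℝ)+1))) = 1 / (R * P) := by
    rw [show -((r+1)*((m:ℝ)+1)) = 0 - (r*((m:ℝ)+1) + ((m:ℝ)+1)) by ring,
      Real.rpow_sub hx0, Real.rpow_add hx0, Real.rpow_zero, e0, hRdef]
  have F0 : x ^ (-((m:ℝ)+1)) = 1 / P := by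
    rw [show -((m:ℝ)+1) = 0 - ((m:ℝ)+1) by ring, Real.rpow_sub hx0, Real.rpow_zero, e0]
  unfold coefQ dQ qint
  push_cast
  rw [m1, m2, m3, m4, m5, m6, N1, N2, N3]
  rw [E1, E3, E4, E5, E7, E9, E10, e0, F1, Fr, F3, F4, F5, F7, F9, F10, F0, hRdef]
  field_simp [hw, hd1, hd2, hd1', hd2', hx2, hP0.ne', hR0.ne', hA, hB, (by rw [sq]; exact hx2 : x ^ 2 - 1 ≠ 0),
    (by rw [sq]; exact hd1' : P ^ 2 - 1 ≠ 0), (by rw [← mul_pow, sq]; exact hd2' : R ^ 2 * P ^ 2 - 1 ≠ 0)]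
  ring

lemma dQ_bound (hx0 : 0 < x) (hx1 : x < 1) (hr : 1 < r) (m : ℕ) :
    |dQ x r m| ≤ 4 * (x ^ (1-2*r)) ^ (m+1) := by
  have hb : (0:ℝ) < x ^ (1-2*r) := rpow_pos_of_pos hx0 _
  have h1 : (x ^ (2*r-1)) ^ (m+1) ≤ (x ^ (1-2*r)) ^ (m+1) :=
    pow_le_pow_left₀ (rpow_pos_of_pos hx0 _).le
      (rpow_le_rpow_of_exponent_ge hx0 hx1.le (by linarith)) _
  have h2 : x ^ (m+1) ≤ (x ^ (1-2*r)) ^ (m+1) := by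
    apply pow_le_pow_left₀ hx0.le
    calc x = x ^ (1:ℝ) := (Real.rpow_one x).symm
      _ ≤ x ^ (1-2*r) := rpow_le_rpow_of_exponent_ge hx0 hx1.le (by linarith)
  have h3 : (x⁻¹) ^ (m+1) ≤ (x ^ (1-2*r)) ^ (m+1) := by
    apply pow_le_pow_left₀ (inv_nonneg.mpr hx0.le)
    calc x⁻¹ = x ^ (-1:ℝ) := (Real.rpow_neg_one x).symm
      _ ≤ x ^ (1-2*r) := rpow_le_rpow_of_exponent_ge hx0 hx1.le (by linarith)
  have p1 : (0:ℝ) < (x ^ (2*r-1)) ^ (m+1) := pow_pos (rpow_pos_of_pos hx0 _) _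
  have p2 : (0:ℝ) < x ^ (m+1) := pow_pos hx0 _
  have p3 : (0:ℝ) < (x⁻¹) ^ (m+1) := pow_pos (inv_pos.mpr hx0) _
  rw [dQ_eq hx0 hx1, abs_le]
  constructor <;> nlinarith [pow_pos hb (m+1)]

/-- summability helper -/
lemma summable_aux {c : ℕ → ℝ} {C t : ℝ} (ht : 0 < t)
    (hb : ∀ m, |c m| ≤ C * t ^ (m+1)) (w : ℂ) (hw : ‖w‖ * t ≤ 1/2) :
    Summable (fun m : ℕ => ((c m : ℝ) : ℂ) * w ^ (m+1) / ((m:ℂ)+1)) := by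
  have hC : 0 ≤ C := by
    by_contra hC0
    push_neg at hC0
    have hneg : C * t ^ (0+1) < 0 := mul_neg_of_neg_of_pos hC0 (pow_pos ht 1)
    linarith [(abs_nonneg (c 0)).trans (hb 0)]
  apply Summable.of_norm_bounded (g := fun m : ℕ => C * (1/2 : ℝ) ^ m)
    ((summable_geometric_two).mul_left C)
  intro m
  have hnm : (1:ℝ) ≤ ‖((m:ℂ)+1)‖ := by
    have : ((m:ℂ)+1) = ((m+1 : ℕ) : ℂ) := by push_cast; ring
    rw [this, Complex.norm_natCast]
    exact_mod_cast Nat.one_le_iff_ne_zero.mpr (Nat.succ_ne_zero m)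
  have h1 : ‖((c m : ℝ) : ℂ) * w ^ (m+1) / ((m:ℂ)+1)‖ ≤ |c m| * ‖w‖ ^ (m+1) := by
    rw [norm_div, norm_mul, Complex.norm_real, norm_pow]
    calc |c m| * ‖w‖ ^ (m+1) / ‖((m:ℂ)+1)‖ ≤ |c m| * ‖w‖ ^ (m+1) / 1 := by
          apply div_le_div_of_nonneg_left (by positivity) one_pos hnm |>.trans_eq rfl
      _ = |c m| * ‖w‖ ^ (m+1) := by ring
  calc ‖((c m : ℝ) : ℂ) * w ^ (m+1) / ((m:ℂ)+1)‖ ≤ |c m| * ‖w‖ ^ (m+1) := h1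
    _ ≤ (C * t ^ (m+1)) * ‖w‖ ^ (m+1) := by
        apply mul_le_mul_of_nonneg_right (hb m) (by positivity)
    _ = C * (t * ‖w‖) ^ (m+1) := by rw [mul_pow]; ring
    _ ≤ C * (1/2) ^ (m+1) := by
        apply mul_le_mul_of_nonneg_left _ hC
        apply pow_le_pow_left₀ (by positivity) (by rw [mul_comm] at hw; linarith)
    _ ≤ C * (1/2) ^ m := by
        apply mul_le_mul_of_nonneg_left _ hC
        apply pow_le_pow_of_le_one (by norm_num) (by norm_num) (Nat.le_succ m)

/-- The Δ function as exp of a power series -/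
lemma Dlt_exp (hx0 : 0 < x) (hx1 : x < 1) (hr : 1 < r) (w : ℂ)
    (hw : ‖w‖ * x ^ (1-2*r) < 1) :
    Dlt x r 1 w = Complex.exp (-∑' m : ℕ, ((dQ x r m : ℝ) : ℂ) * w ^ (m+1) / ((m:ℂ)+1)) := by
  have hxb : ∀ c : ℝ, x ^ c ≤ x ^ (1-2*r) → ‖((x ^ c : ℝ) : ℂ) * w‖ < 1 := by
    intro c hc
    rw [norm_mul, Complex.norm_real, Real.norm_eq_abs, abs_of_pos (rpow_pos_of_pos hx0 c)]
    calc x ^ c * ‖w‖ ≤ x ^ (1-2*r) * ‖w‖ :=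
          mul_le_mul_of_nonneg_right hc (norm_nonneg w)
      _ < 1 := by rw [mul_comm]; exact hw
  have hb1 : x ^ (2*r-1) ≤ x ^ (1-2*r) := rpow_le_rpow_of_exponent_ge hx0 hx1.le (by linarith)
  have hb2 : x ^ (1-2*r) ≤ x ^ (1-2*r) := le_refl _
  have hb3 : x ^ (1:ℝ) ≤ x ^ (1-2*r) := rpow_le_rpow_of_exponent_ge hx0 hx1.le (by linarith)
  have hb4 : x ^ (-1:ℝ) ≤ x ^ (1-2*r) := rpow_le_rpow_of_exponent_ge hx0 hx1.le (by linarith)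
  -- the four log series
  have hasSumLog : ∀ u : ℂ, ‖u‖ < 1 →
      HasSum (fun m : ℕ => u ^ (m+1) / ((m:ℂ)+1)) (-Complex.log (1 - u)) := by
    intro u hu
    have H := Complex.hasSum_taylorSeries_neg_log hu
    have H2 := (hasSum_nat_add_iff' (f := fun n : ℕ => u ^ n / (n:ℂ)) 1).mpr H
    simp only [Finset.range_one, Finset.sum_singleton, Nat.cast_zero, pow_zero] at H2
    norm_num at H2
    exact H2.congr_fun fun m => by ring
  set u1 : ℂ := ((x ^ (2*r-1) : ℝ) : ℂ) * w with hu1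
  set u2 : ℂ := ((x ^ (1-2*r) : ℝ) : ℂ) * w with hu2
  set u3 : ℂ := ((x : ℝ) : ℂ) * w with hu3
  set u4 : ℂ := ((x ^ (-1:ℝ) : ℝ) : ℂ) * w with hu4
  have n1 := hxb _ hb1
  have n2 := hxb _ hb2
  have n3 : ‖((x:ℝ):ℂ) * w‖ < 1 := by
    have h := hxb _ hb3
    rwa [Real.rpow_one] at h
  have n4 := hxb _ hb4
  have H1 := hasSumLog u1 n1
  have H2 := hasSumLog u2 n2
  have H3 := hasSumLog u3 n3
  have H4 := hasSumLog u4 n4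
  have hterm : (fun m : ℕ => ((dQ x r m : ℝ) : ℂ) * w ^ (m+1) / ((m:ℂ)+1))
      = fun m : ℕ => (u1 ^ (m+1) / ((m:ℂ)+1) + u2 ^ (m+1) / ((m:ℂ)+1))
          - (u3 ^ (m+1) / ((m:ℂ)+1) + u4 ^ (m+1) / ((m:ℂ)+1)) := by
    funext m
    rw [dQ_eq hx0 hx1, hu1, hu2, hu3, hu4]
    push_cast [Real.rpow_neg_one]
    ring
  have Hsum : HasSum (fun m : ℕ => ((dQ x r m : ℝ) : ℂ) * w ^ (m+1) / ((m:ℂ)+1))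
      ((-Complex.log (1 - u1) + -Complex.log (1 - u2))
        - (-Complex.log (1 - u3) + -Complex.log (1 - u4))) := by
    rw [hterm]
    exact (H1.add H2).sub (H3.add H4)
  rw [Hsum.tsum_eq]
  have neAux : ∀ u : ℂ, ‖u‖ < 1 → (1 : ℂ) - u ≠ 0 := by
    intro u hu h
    rw [sub_eq_zero] at h
    rw [← h] at hu
    norm_num at hu
  have ne1 : (1 : ℂ) - u1 ≠ 0 := neAux _ n1
  have ne2 : (1 : ℂ) - u2 ≠ 0 := neAux _ n2
  have ne3 : (1 : ℂ) - u3 ≠ 0 := neAux _ n3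
  have ne4 : (1 : ℂ) - u4 ≠ 0 := neAux _ n4
  have : -((-Complex.log (1 - u1) + -Complex.log (1 - u2))
        - (-Complex.log (1 - u3) + -Complex.log (1 - u4)))
      = (Complex.log (1 - u1) + Complex.log (1 - u2))
        - (Complex.log (1 - u3) + Complex.log (1 - u4)) := by ring
  rw [this, Complex.exp_sub, Complex.exp_add, Complex.exp_add,
    Complex.exp_log ne1, Complex.exp_log ne2, Complex.exp_log ne3, Complex.exp_log ne4]
  unfold Dlt
  norm_num
  rfl
end aux

/-- Symmetry `f_{i,j} = f_{j,i}` and the fusion relation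
`f_{1,i}(z) f_{j,i}(x^{j+1} z) = f_{j+1,i}(x^j z) Δ_1(x^i z)` for `1 ≤ i ≤ j`. -/
theorem f_symm_and_fusion (x : ℝ) (hx0 : 0 < x) (hx1 : x < 1) (r : ℝ) (hr : 1 < r) :
    (∀ i j : ℕ, 1 ≤ i → 1 ≤ j → ∀ z : ℂ, ff x r i j z = ff x r j i z)
      ∧ (∀ i j : ℕ, 1 ≤ i → i ≤ j →
        ∃ ε > 0, ∀ z : ℂ, ‖z‖ < ε →
          ff x r 1 i z * ff x r j i (((x ^ (j + 1) : ℝ) : ℂ) * z)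
            = ff x r (j + 1) i (((x ^ j : ℝ) : ℂ) * z) * Dlt x r 1 (((x ^ i : ℝ) : ℂ) * z)) := by
  constructor
  · intro i j _ _ z
    unfold ff
    simp only [min_comm (i:ℝ) (j:ℝ), max_comm (i:ℝ) (j:ℝ)]
  · intro i j hi hij
    obtain ⟨k, rfl⟩ : ∃ k, j = i + k := ⟨j - i, by omega⟩
    obtain ⟨C1, hC1, t1, ht1, hb1⟩ := coefQ_bound hx0 hx1 hr 1 i
    obtain ⟨C2, hC2, t2, ht2, hb2⟩ := coefQ_bound hx0 hx1 hr (i+k) i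
    obtain ⟨C3, hC3, t3, ht3, hb3⟩ := coefQ_bound hx0 hx1 hr (i+k+1) i
    set T := max t1 (max t2 (max t3 (x ^ (1-2*r)))) with hT
    have hT0 : 0 < T := lt_of_lt_of_le ht1 (le_max_left _ _)
    refine ⟨min ((2*T)⁻¹) (x ^ (2*r-1) / 2),
      lt_min (by positivity) (div_pos (rpow_pos_of_pos hx0 _) two_pos), ?_⟩
    intro z hz
    have hz1 : ‖z‖ < (2*T)⁻¹ := lt_of_lt_of_le hz (min_le_left _ _)
    have hz2 : ‖z‖ < x ^ (2*r-1) / 2 := lt_of_lt_of_le hz (min_le_right _ _)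
    have key : ∀ t' : ℝ, 0 < t' → t' ≤ T → ‖z‖ * t' ≤ 1/2 := by
      intro t' ht' hle
      have h1 : ‖z‖ * t' ≤ ‖z‖ * T := mul_le_mul_of_nonneg_left hle (norm_nonneg z)
      have h2 : ‖z‖ * T < (2*T)⁻¹ * T := mul_lt_mul_of_pos_right hz1 hT0
      have h3 : (2*T)⁻¹ * T = 1/2 := by field_simp
      linarith
    have hwle : ∀ c : ℝ, 0 ≤ c → c ≤ 1 → ‖((c:ℝ):ℂ) * z‖ ≤ ‖z‖ := by
      intro c hc0 hc1
      rw [norm_mul, Complex.norm_real, Real.norm_eq_abs, abs_of_nonneg hc0]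
      nlinarith [norm_nonneg z]
    have hx_pow_le_one : ∀ n : ℕ, x ^ n ≤ 1 := fun n => pow_le_one₀ hx0.le hx1.le
    have hx_pow_nonneg : ∀ n : ℕ, (0:ℝ) ≤ x ^ n := fun n => (pow_pos hx0 n).le
    -- summability
    have hS1 : Summable (fun m : ℕ => ((coefQ x r 1 i m : ℝ) : ℂ) * z ^ (m+1) / ((m:ℂ)+1)) :=
      summable_aux ht1 hb1 z (key t1 ht1 (le_max_left _ _))
    have hS2 : Summable (fun m : ℕ =>
        ((coefQ x r (i+k) i m : ℝ) : ℂ) * (((x ^ (i+k+1) : ℝ) : ℂ) * z) ^ (m+1) / ((m:ℂ)+1)) := by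
      apply summable_aux ht2 hb2
      calc ‖((x ^ (i+k+1) : ℝ) : ℂ) * z‖ * t2 ≤ ‖z‖ * t2 :=
            mul_le_mul_of_nonneg_right (hwle _ (hx_pow_nonneg _) (hx_pow_le_one _)) ht2.le
        _ ≤ 1/2 := key t2 ht2 ((le_max_left _ _).trans (le_max_right _ _))
    have hS3 : Summable (fun m : ℕ =>
        ((coefQ x r (i+k+1) i m : ℝ) : ℂ) * (((x ^ (i+k) : ℝ) : ℂ) * z) ^ (m+1) / ((m:ℂ)+1)) := by
      apply summable_aux ht3 hb3
      calc ‖((x ^ (i+k) : ℝ) : ℂ) * z‖ * t3 ≤ ‖z‖ * t3 :=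
            mul_le_mul_of_nonneg_right (hwle _ (hx_pow_nonneg _) (hx_pow_le_one _)) ht3.le
        _ ≤ 1/2 := key t3 ht3 (((le_max_left _ _).trans (le_max_right _ _)).trans (le_max_right _ _))
    have hxr : (0:ℝ) < x ^ (1-2*r) := rpow_pos_of_pos hx0 _
    have hxrT : x ^ (1-2*r) ≤ T :=
      ((le_max_right _ _).trans (le_max_right _ _)).trans (le_max_right _ _)
    have hw4 : ‖((x ^ i : ℝ) : ℂ) * z‖ * x ^ (1-2*r) ≤ 1/2 :=
      calc ‖((x ^ i : ℝ) : ℂ) * z‖ * x ^ (1-2*r) ≤ ‖z‖ * x ^ (1-2*r) :=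
            mul_le_mul_of_nonneg_right (hwle _ (hx_pow_nonneg _) (hx_pow_le_one _)) hxr.le
        _ ≤ 1/2 := key _ hxr hxrT
    have hS4 : Summable (fun m : ℕ =>
        ((dQ x r m : ℝ) : ℂ) * (((x ^ i : ℝ) : ℂ) * z) ^ (m+1) / ((m:ℂ)+1)) :=
      summable_aux hxr (fun m => dQ_bound hx0 hx1 hr m) _ hw4
    -- termwise identity
    have hterm : ∀ m : ℕ,
        ((coefQ x r 1 i m : ℝ) : ℂ) * z ^ (m+1) / ((m:ℂ)+1)
          + ((coefQ x r (i+k) i m : ℝ) : ℂ) * (((x ^ (i+k+1) : ℝ) : ℂ) * z) ^ (m+1) / ((m:ℂ)+1)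
        = ((coefQ x r (i+k+1) i m : ℝ) : ℂ) * (((x ^ (i+k) : ℝ) : ℂ) * z) ^ (m+1) / ((m:ℂ)+1)
          + ((dQ x r m : ℝ) : ℂ) * (((x ^ i : ℝ) : ℂ) * z) ^ (m+1) / ((m:ℂ)+1) := by
      intro m
      have hkey := keyid hx0 hx1 hr i k m hi
      have cast_eq : ((coefQ x r 1 i m : ℝ) : ℂ) + (coefQ x r (i+k) i m : ℂ) * (x:ℂ) ^ ((i+k+1)*(m+1))
          = (coefQ x r (i+k+1) i m : ℂ) * (x:ℂ) ^ ((i+k)*(m+1)) + (dQ x r m : ℂ) * (x:ℂ) ^ (i*(m+1)) := by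
        exact_mod_cast congrArg (fun t : ℝ => (t : ℂ)) hkey
      push_cast
      linear_combination (z ^ (m+1) / ((m:ℂ)+1)) * cast_eq
    have hsum :
        (∑' m : ℕ, ((coefQ x r 1 i m : ℝ) : ℂ) * z ^ (m+1) / ((m:ℂ)+1))
          + (∑' m : ℕ, ((coefQ x r (i+k) i m : ℝ) : ℂ) * (((x ^ (i+k+1) : ℝ) : ℂ) * z) ^ (m+1) / ((m:ℂ)+1))
        = (∑' m : ℕ, ((coefQ x r (i+k+1) i m : ℝ) : ℂ) * (((x ^ (i+k) : ℝ) : ℂ) * z) ^ (m+1) / ((m:ℂ)+1))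
          + (∑' m : ℕ, ((dQ x r m : ℝ) : ℂ) * (((x ^ i : ℝ) : ℂ) * z) ^ (m+1) / ((m:ℂ)+1)) := by
      rw [← Summable.tsum_add hS1 hS2, ← Summable.tsum_add hS3 hS4]
      exact tsum_congr hterm
    have hDcond : ‖((x ^ i : ℝ) : ℂ) * z‖ * x ^ (1-2*r) < 1 := lt_of_le_of_lt hw4 (by norm_num)
    rw [ff_eq, ff_eq, ff_eq, Dlt_exp hx0 hx1 hr _ hDcond, ← Complex.exp_add, ← Complex.exp_add]
    congr 1
    rw [← neg_add, ← neg_add, hsum]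
end
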